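/- arXiv:2506.07349 — 7 statements merged into one kernel-verified Lean document; each statement's English description precedes it below -/
import Mathlib

section
/- If F: C → H is uniformly continuous on a convex subset C of a real Hilbert space H, then for every ε > 0 there exists a constant M < ∞ such that ‖F(z) − F(w)‖ ≤ M‖z − w‖ + ε for all w, z ∈ C. -/
open scoped RealInnerProductSpace

lemma telescope_norm {H : Type*} [NormedAddCommGroup H] (f : ℕ → H) (n : ℕ) :
    ‖f n - f 0‖ ≤ ∑ i ∈ Finset.range n, ‖f (i + 1) - f i‖ := by
  induction n with
  | zero => simp
  | succ n ih =>
      rw [Finset.sum_range_succ]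
      calc ‖f (n + 1) - f 0‖ ≤ ‖f n - f 0‖ + ‖f (n + 1) - f n‖ := by
            have := norm_add_le (f n - f 0) (f (n + 1) - f n)
            simpa [sub_add_sub_cancel'] using this
        _ ≤ _ := by linarith

/-- If `F : C → H` is uniformly continuous on a convex subset `C` of a real Hilbert
space `H`, then for every `ε > 0` there is a constant `M < ∞` such that
`‖F z - F w‖ ≤ M‖z - w‖ + ε` for all `w, z ∈ C`. -/
theorem stmt_0 {H : Type*} [NormedAddCommGroup H] [InnerProductSpace ℝ H] [CompleteSpace H]
    (C : Set H) (hC : Convex ℝ C) (F : H → H)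
    (hF : ∀ ε > (0 : ℝ), ∃ δ > (0 : ℝ), ∀ w ∈ C, ∀ z ∈ C, ‖w - z‖ < δ → ‖F w - F z‖ < ε) :
    ∀ ε > (0 : ℝ), ∃ M : ℝ, 0 < M ∧ ∀ w ∈ C, ∀ z ∈ C, ‖F z - F w‖ ≤ M * ‖z - w‖ + ε := by
  intro ε hε
  obtain ⟨δ, hδ, hδε⟩ := hF (ε / 2) (by linarith)
  refine ⟨ε / (2 * δ), by positivity, ?_⟩
  intro w hw z hz
  set r : ℝ := ‖z - w‖ with hr
  have hr0 : 0 ≤ r := norm_nonneg _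
  set n : ℕ := ⌈r / δ⌉₊ + 1 with hn
  have hn0 : 0 < n := Nat.succ_pos _
  have hnR : (0 : ℝ) < n := by exact_mod_cast hn0
  have hrn : r / δ < n := by
    have := Nat.le_ceil (r / δ)
    have : r / δ ≤ (⌈r / δ⌉₊ : ℝ) := this
    push_cast [hn]
    linarith
  have hrlt : r < n * δ := by
    have := (div_lt_iff₀ hδ).mp hrn
    linarith
  have hnle : (n : ℝ) ≤ r / δ + 2 := by
    have := Nat.ceil_lt_add_one (by positivity : (0:ℝ) ≤ r / δ)
    push_cast [hn]
    linarith
  -- subdivision points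
  set x : ℕ → H := fun i => w + ((i : ℝ) / n) • (z - w) with hx
  have hx0 : x 0 = w := by simp [hx]
  have hxn : x n = z := by
    simp only [hx]
    rw [div_self (ne_of_gt hnR), one_smul]
    abel
  have hxmem : ∀ i ≤ n, x i ∈ C := by
    intro i hi
    have ht0 : (0 : ℝ) ≤ (i : ℝ) / n := by positivity
    have ht1 : (i : ℝ) / n ≤ 1 := by
      rw [div_le_one hnR]; exact_mod_cast hi
    have := hC hw hz (a := 1 - (i : ℝ) / n) (b := (i : ℝ) / n) (by linarith) ht0 (by ring)
    convert this using 1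
    simp only [hx]
    module
  have hstep : ∀ i, ‖x (i + 1) - x i‖ < δ := by
    intro i
    have : x (i + 1) - x i = ((1 : ℝ) / n) • (z - w) := by
      simp only [hx]
      push_cast
      match_scalars
      · ring
      · field_simp; ring
    rw [this, norm_smul, Real.norm_eq_abs, abs_of_pos (by positivity : (0:ℝ) < 1 / n)]
    calc 1 / (n : ℝ) * ‖z - w‖ = r / n := by rw [← hr]; ring
      _ < δ := by rw [div_lt_iff₀ hnR]; linarith
  have hsum : ‖F z - F w‖ ≤ ∑ i ∈ Finset.range n, ‖F (x (i + 1)) - F (x i)‖ := by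
    have := telescope_norm (fun i => F (x i)) n
    simpa [hx0, hxn] using this
  have hterm : ∀ i ∈ Finset.range n, ‖F (x (i + 1)) - F (x i)‖ ≤ ε / 2 := by
    intro i hi
    rw [Finset.mem_range] at hi
    exact le_of_lt (hδε _ (hxmem _ (Nat.succ_le_of_lt hi)) _ (hxmem _ (le_of_lt hi))
      (by simpa [norm_sub_rev] using hstep i))
  calc ‖F z - F w‖ ≤ ∑ i ∈ Finset.range n, ‖F (x (i + 1)) - F (x i)‖ := hsum
    _ ≤ ∑ _i ∈ Finset.range n, ε / 2 := Finset.sum_le_sum hterm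
    _ = n * (ε / 2) := by rw [Finset.sum_const, Finset.card_range]; push_cast; ring
    _ ≤ (r / δ + 2) * (ε / 2) := by
        apply mul_le_mul_of_nonneg_right hnle (by linarith)
    _ = ε / (2 * δ) * ‖z - w‖ + ε := by rw [← hr]; field_simp
end

section
/- Let z ∈ H and α ≥ β > 0. With z(α) = P_C(z − αF(z)) and residual e(z, α) = z − z(α), one has (1/α)‖e(z, α)‖ ≤ (1/β)‖e(z, β)‖. -/
/-!
Write `e_α = z - z(α)` and `e_β = z - z(β)`. The variational inequalities of the two projections,
each tested at the other projected point, combine (weighted by `β` and `α`) so that `F z`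
cancels, leaving `β ‖e_α‖² + α ‖e_β‖² ≤ (α + β) ⟪e_α, e_β⟫ ≤ (α + β) ‖e_α‖ ‖e_β‖`, i.e.
`(β ‖e_α‖ - α ‖e_β‖) (‖e_α‖ - ‖e_β‖) ≤ 0`; together with `β ≤ α` this forces
`β ‖e_α‖ ≤ α ‖e_β‖`.
-/

open scoped RealInnerProductSpace

lemma real_inner_sub_le_zero_of_forall_norm_sub_le {H : Type*} [NormedAddCommGroup H]
    [InnerProductSpace ℝ H] {C : Set H} (hC : Convex ℝ C) {x p : H} (hp : p ∈ C)
    (hproj : ∀ u ∈ C, ‖x - p‖ ≤ ‖x - u‖) {w : H} (hw : w ∈ C) :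
    ⟪x - p, w - p⟫ ≤ 0 := by
  have : Nonempty C := ⟨⟨p, hp⟩⟩
  have hinf : ‖x - p‖ = ⨅ u : C, ‖x - u‖ :=
    le_antisymm (le_ciInf fun u => hproj u u.2)
      (ciInf_le ⟨0, fun _ ⟨_, hu⟩ => hu ▸ norm_nonneg _⟩ (⟨p, hp⟩ : C))
  exact (norm_eq_iInf_iff_real_inner_le_zero hC hp).mp hinf w hw

lemma mul_norm_sq_add_mul_norm_sq_le_inner_of_proj {H : Type*} [NormedAddCommGroup H]
    [InnerProductSpace ℝ H] {C : Set H} (hC : Convex ℝ C) (z v : H) {α β : ℝ}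
    (hα : 0 ≤ α) (hβ : 0 ≤ β) {p q : H}
    (hp : p ∈ C) (hpproj : ∀ u ∈ C, ‖z - α • v - p‖ ≤ ‖z - α • v - u‖)
    (hq : q ∈ C) (hqproj : ∀ u ∈ C, ‖z - β • v - q‖ ≤ ‖z - β • v - u‖) :
    β * ‖z - p‖ ^ 2 + α * ‖z - q‖ ^ 2 ≤ (α + β) * ⟪z - p, z - q⟫ := by
  have hpq := real_inner_sub_le_zero_of_forall_norm_sub_le hC hp hpproj hq
  have hqp := real_inner_sub_le_zero_of_forall_norm_sub_le hC hq hqproj hp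
  rw [show z - α • v - p = (z - p) - α • v by abel, show q - p = (z - p) - (z - q) by abel]
    at hpq
  rw [show z - β • v - q = (z - q) - β • v by abel, show p - q = (z - q) - (z - p) by abel]
    at hqp
  generalize z - p = a at hpq hqp ⊢
  generalize z - q = b at hpq hqp ⊢
  simp only [inner_sub_left, inner_sub_right, real_inner_smul_left, real_inner_self_eq_norm_sq]
    at hpq hqp
  rw [real_inner_comm a b] at hqp
  nlinarith [mul_le_mul_of_nonneg_left hpq hβ, mul_le_mul_of_nonneg_left hqp hα]

lemma mul_le_mul_of_mul_sq_add_mul_sq_le {a b α β : ℝ} (hb : 0 ≤ b) (hβ : 0 ≤ β)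
    (hαβ : β ≤ α) (h : β * a ^ 2 + α * b ^ 2 ≤ (α + β) * (a * b)) :
    β * a ≤ α * b := by
  by_contra! hlt
  have hfactor : (β * a - α * b) * (a - b) ≤ 0 := by nlinarith
  have hab : a ≤ b := by nlinarith
  nlinarith [mul_le_mul_of_nonneg_left hab hβ, mul_le_mul_of_nonneg_right hαβ hb]

theorem stmt_9_general {H : Type*} [NormedAddCommGroup H] [InnerProductSpace ℝ H]
    (C : Set H) (hC : Convex ℝ C)
    (F : H → H) (z : H) (α β : ℝ) (hβ : 0 < β) (hαβ : β ≤ α)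
    (zα zβ : H)
    (hzα : zα ∈ C) (hzαproj : ∀ u ∈ C, ‖z - α • F z - zα‖ ≤ ‖z - α • F z - u‖)
    (hzβ : zβ ∈ C) (hzβproj : ∀ u ∈ C, ‖z - β • F z - zβ‖ ≤ ‖z - β • F z - u‖) :
    (1 / α) * ‖z - zα‖ ≤ (1 / β) * ‖z - zβ‖ := by
  have hα : 0 < α := hβ.trans_le hαβ
  have hinner := mul_norm_sq_add_mul_norm_sq_le_inner_of_proj hC z (F z) hα.le hβ.le
    hzα hzαproj hzβ hzβproj
  have hnorm : β * ‖z - zα‖ ^ 2 + α * ‖z - zβ‖ ^ 2 ≤ (α + β) * (‖z - zα‖ * ‖z - zβ‖) :=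
    hinner.trans (mul_le_mul_of_nonneg_left (real_inner_le_norm _ _) (by linarith))
  have key := mul_le_mul_of_mul_sq_add_mul_sq_le (norm_nonneg _) hβ.le hαβ hnorm
  rw [one_div_mul_eq_div, one_div_mul_eq_div, div_le_div_iff₀ hα hβ]
  linarith

/-- Let `z ∈ H` and `α ≥ β > 0`. With `z(λ) = P_C (z - λ F z)` and residual
`e(z, λ) = z - z(λ)`, one has `(1/α)‖e(z, α)‖ ≤ (1/β)‖e(z, β)‖`. -/
theorem stmt_9 {H : Type*} [NormedAddCommGroup H] [InnerProductSpace ℝ H] [CompleteSpace H]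
    (C : Set H) (hCne : C.Nonempty) (hCc : IsClosed C) (hC : Convex ℝ C)
    (F : H → H) (z : H) (α β : ℝ) (hβ : 0 < β) (hαβ : β ≤ α)
    (zα zβ : H)
    (hzα : zα ∈ C) (hzαproj : ∀ u ∈ C, ‖z - α • F z - zα‖ ≤ ‖z - α • F z - u‖)
    (hzβ : zβ ∈ C) (hzβproj : ∀ u ∈ C, ‖z - β • F z - zβ‖ ≤ ‖z - β • F z - u‖) :
    (1 / α) * ‖z - zα‖ ≤ (1 / β) * ‖z - zβ‖ :=
  stmt_9_general C hC F z α β hβ hαβ zα zβ hzα hzαproj hzβ hzβproj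
end

section
/- Let z ∈ H and α ≥ β > 0. With e(z, λ) = z − P_C(z − λF(z)), one has ‖e(z, β)‖ ≤ ‖e(z, α)‖, i.e., the residual norm is nondecreasing in the stepsize. -/
/-!
Write `a = e(z, α)`, `b = e(z, β)` and `d = F z`. The variational inequalities characterising the
two projections read `⟪a - α d, a - b⟫ ≤ 0` and `⟪b - β d, b - a⟫ ≤ 0`; weighting them by `β` and
`α` eliminates `d` and leaves `β ‖a‖² + α ‖b‖² ≤ (α + β) ⟪a, b⟫ ≤ (α + β) ‖a‖ ‖b‖`, that is
`(β ‖a‖ - α ‖b‖) (‖a‖ - ‖b‖) ≤ 0`, which forces `‖b‖ ≤ ‖a‖` when `0 < β ≤ α`.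
-/

open scoped RealInnerProductSpace

section

variable {H : Type*} [NormedAddCommGroup H] [InnerProductSpace ℝ H]

theorem real_inner_sub_sub_nonpos_of_forall_norm_sub_le {C : Set H} (hC : Convex ℝ C) {x p : H}
    (hp : p ∈ C) (hmin : ∀ u ∈ C, ‖x - p‖ ≤ ‖x - u‖) {u : H} (hu : u ∈ C) :
    ⟪x - p, u - p⟫ ≤ 0 := by
  have : Nonempty C := ⟨⟨p, hp⟩⟩
  have hinf : ‖x - p‖ = ⨅ w : C, ‖x - w‖ :=
    le_antisymm (le_ciInf fun w => hmin w w.2)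
      (ciInf_le ⟨0, by rintro _ ⟨w, rfl⟩; positivity⟩ (⟨p, hp⟩ : C))
  exact (norm_eq_iInf_iff_real_inner_le_zero hC hp).mp hinf u hu

theorem le_of_mul_sq_add_mul_sq_le {a b α β : ℝ} (ha : 0 ≤ a) (hβ : 0 < β) (hαβ : β ≤ α)
    (h : β * a ^ 2 + α * b ^ 2 ≤ (α + β) * (a * b)) : b ≤ a := by
  by_contra! hab
  have hβa : β * a < α * b := by nlinarith
  nlinarith [mul_pos (sub_pos.2 hab) (sub_pos.2 hβa)]

theorem norm_le_norm_of_real_inner_smul_sub_nonpos {a b d : H} {α β : ℝ} (hβ : 0 < β)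
    (hαβ : β ≤ α) (ha : ⟪a - α • d, a - b⟫ ≤ 0) (hb : ⟪b - β • d, b - a⟫ ≤ 0) :
    ‖b‖ ≤ ‖a‖ := by
  have hα : 0 < α := hβ.trans_le hαβ
  have hd : β * ⟪a, a - b⟫ - α * ⟪b, a - b⟫ ≤ 0 := by
    rw [inner_sub_left, real_inner_smul_left] at ha hb
    rw [← neg_sub a b, inner_neg_right, inner_neg_right] at hb
    linear_combination β * ha + α * hb
  have hsq : β * ‖a‖ ^ 2 + α * ‖b‖ ^ 2 ≤ (α + β) * ⟪a, b⟫ := by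
    simp only [inner_sub_right, real_inner_self_eq_norm_sq, real_inner_comm a b] at hd
    linarith
  refine le_of_mul_sq_add_mul_sq_le (norm_nonneg a) hβ hαβ (hsq.trans ?_)
  exact mul_le_mul_of_nonneg_left (real_inner_le_norm a b) (by linarith)

end

theorem stmt_10_general {H : Type*} [NormedAddCommGroup H] [InnerProductSpace ℝ H]
    (C : Set H) (hC : Convex ℝ C)
    (F : H → H) (z : H) (α β : ℝ) (hβ : 0 < β) (hαβ : β ≤ α)
    (zα zβ : H)
    (hzα : zα ∈ C) (hzαproj : ∀ u ∈ C, ‖z - α • F z - zα‖ ≤ ‖z - α • F z - u‖)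
    (hzβ : zβ ∈ C) (hzβproj : ∀ u ∈ C, ‖z - β • F z - zβ‖ ≤ ‖z - β • F z - u‖) :
    ‖z - zβ‖ ≤ ‖z - zα‖ := by
  have hvα := real_inner_sub_sub_nonpos_of_forall_norm_sub_le hC hzα hzαproj hzβ
  have hvβ := real_inner_sub_sub_nonpos_of_forall_norm_sub_le hC hzβ hzβproj hzα
  refine norm_le_norm_of_real_inner_smul_sub_nonpos (d := F z) hβ hαβ ?_ ?_
  · convert hvα using 2 <;> abel
  · convert hvβ using 2 <;> abel

/-- Let `z ∈ H` and `α ≥ β > 0`. With `e(z, λ) = z - P_C (z - λ F z)`, one has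
`‖e(z, β)‖ ≤ ‖e(z, α)‖`: the residual norm is nondecreasing in the stepsize. -/
theorem stmt_10 {H : Type*} [NormedAddCommGroup H] [InnerProductSpace ℝ H] [CompleteSpace H]
    (C : Set H) (hCne : C.Nonempty) (hCc : IsClosed C) (hC : Convex ℝ C)
    (F : H → H) (z : H) (α β : ℝ) (hβ : 0 < β) (hαβ : β ≤ α)
    (zα zβ : H)
    (hzα : zα ∈ C) (hzαproj : ∀ u ∈ C, ‖z - α • F z - zα‖ ≤ ‖z - α • F z - u‖)
    (hzβ : zβ ∈ C) (hzβproj : ∀ u ∈ C, ‖z - β • F z - zβ‖ ≤ ‖z - β • F z - u‖) :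
    ‖z - zβ‖ ≤ ‖z - zα‖ :=
  stmt_10_general C hC F z α β hβ hαβ zα zβ hzα hzαproj hzβ hzβproj
end

section
/- Let z_n ∈ H, λ_n > 0, w_n = P_C(z_n − λ_n F(z_n)), z_{n+1} = w_n + λ_n(F(z_n) − F(w_n)), and let x* ∈ C satisfy ⟨F(w_n), w_n − x*⟩ ≥ 0. Then ‖z_{n+1} − x*‖² ≤ ‖z_n − x*‖² − ‖w_n − z_n‖² + λ_n²‖F(w_n) − F(z_n)‖². -/
open scoped RealInnerProductSpace

/-!
Expanding the square, `‖z_{n+1} - x*‖²` equals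
`‖z_n - x*‖² - ‖w_n - z_n‖² + λ²‖F w_n - F z_n‖²` plus the two cross terms
`2⟪w_n - z_n + λ F z_n, w_n - x*⟫` and `-2λ⟪F w_n, w_n - x*⟫`. The first is nonpositive by the
variational characterization of `w_n` as a projection, tested at `x* ∈ C`; the second by the
hypothesis on `x*`.
-/

section TsengStep

variable {H : Type*} [NormedAddCommGroup H] [InnerProductSpace ℝ H]

theorem norm_sub_sq_eq_norm_sub_sq_sub_norm_sub_sq_add_inner (w z x : H) :
    ‖w - x‖ ^ 2 = ‖z - x‖ ^ 2 - ‖w - z‖ ^ 2 + 2 * ⟪w - z, w - x⟫ := by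
  have hwx : w - x = (w - z) + (z - x) := by abel
  rw [hwx, norm_add_sq_real, inner_add_right, real_inner_self_eq_norm_sq]
  ring

theorem norm_add_smul_sub_sub_sq_eq (w z x a b : H) (t : ℝ) :
    ‖w + t • (a - b) - x‖ ^ 2 = ‖z - x‖ ^ 2 - ‖w - z‖ ^ 2 + t ^ 2 * ‖b - a‖ ^ 2
      + 2 * ⟪w - z + t • a, w - x⟫ - 2 * t * ⟪b, w - x⟫ := by
  have hsplit : w + t • (a - b) - x = (w - x) + t • (a - b) := by abel
  have hcross : ⟪w - x, t • (a - b)⟫ = t * ⟪a, w - x⟫ - t * ⟪b, w - x⟫ := by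
    rw [real_inner_smul_right, inner_sub_right, real_inner_comm a, real_inner_comm b]
    ring
  rw [hsplit, norm_add_sq_real, hcross, norm_smul, mul_pow, Real.norm_eq_abs, sq_abs,
    ← norm_neg (a - b), neg_sub, norm_sub_sq_eq_norm_sub_sq_sub_norm_sub_sq_add_inner w z x,
    inner_add_left, real_inner_smul_left]
  ring

end TsengStep

theorem stmt_15_general {H : Type*} [NormedAddCommGroup H] [InnerProductSpace ℝ H]
    (C : Set H)
    (F : H → H) (zn wn zn1 x : H) (lam : ℝ) (hlam : 0 < lam)
    (hwnproj : ∀ u ∈ C, ⟪zn - lam • F zn - wn, u - wn⟫ ≤ 0)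
    (hzn1 : zn1 = wn + lam • (F zn - F wn))
    (hx : x ∈ C) (hxineq : 0 ≤ ⟪F wn, wn - x⟫) :
    ‖zn1 - x‖ ^ 2 ≤ ‖zn - x‖ ^ 2 - ‖wn - zn‖ ^ 2 + lam ^ 2 * ‖F wn - F zn‖ ^ 2 := by
  have hproj : ⟪wn - zn + lam • F zn, wn - x⟫ ≤ 0 := by
    have hneg : wn - zn + lam • F zn = -(zn - lam • F zn - wn) := by abel
    rw [hneg, ← neg_sub x wn, inner_neg_neg]
    exact hwnproj x hx
  have hfw : 0 ≤ lam * ⟪F wn, wn - x⟫ := mul_nonneg hlam.le hxineq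
  rw [hzn1, norm_add_smul_sub_sub_sq_eq wn zn x]
  linarith

/-- One-step inequality of Tseng's extragradient method: with
`w_n = P_C (z_n - λ_n F z_n)` (characterized by the variational inequality of the
projection), `z_{n+1} = w_n + λ_n (F z_n - F w_n)`, and `x* ∈ C` with
`⟪F w_n, w_n - x*⟫ ≥ 0`, one has
`‖z_{n+1} - x*‖² ≤ ‖z_n - x*‖² - ‖w_n - z_n‖² + λ_n² ‖F w_n - F z_n‖²`. -/
theorem stmt_15 {H : Type*} [NormedAddCommGroup H] [InnerProductSpace ℝ H] [CompleteSpace H]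
    (C : Set H) (hCne : C.Nonempty) (hCc : IsClosed C) (hC : Convex ℝ C)
    (F : H → H) (zn wn zn1 x : H) (lam : ℝ) (hlam : 0 < lam)
    (hwn : wn ∈ C)
    (hwnproj : ∀ u ∈ C, ⟪zn - lam • F zn - wn, u - wn⟫ ≤ 0)
    (hzn1 : zn1 = wn + lam • (F zn - F wn))
    (hx : x ∈ C) (hxineq : 0 ≤ ⟪F wn, wn - x⟫) :
    ‖zn1 - x‖ ^ 2 ≤ ‖zn - x‖ ^ 2 - ‖wn - zn‖ ^ 2 + lam ^ 2 * ‖F wn - F zn‖ ^ 2 :=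
  stmt_15_general C F zn wn zn1 x lam hlam hwnproj hzn1 hx hxineq
end

section
/- Under the hypotheses of the one-step inequality of Tseng's method, if additionally λ_{n+1} ≤ μ‖z_n − w_n‖/‖F(z_n) − F(w_n)‖ (with F(z_n) ≠ F(w_n)) and λ_{n+1} ≥ λ_n, μ ∈ (0,1), then ‖z_{n+1} − x*‖² ≤ ‖z_n − x*‖² − (1 − μ²)‖w_n − z_n‖². -/
/-!
Expanding `‖w + λ (F z - F w) - x‖²` around `z`, the cross terms are
`-2 ⟪z - λ F z - w, w - x⟫` and `-2 λ ⟪F w, w - x⟫`, both nonpositive: the first by the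
variational characterisation of `w = P_C (z - λ F z)` tested at `x ∈ C`, the second by the choice
of `x`. The remaining term `λ² ‖F z - F w‖²` is at most `μ² ‖z - w‖²` by the step-size rule.
-/

open scoped RealInnerProductSpace

section TsengStep

variable {H : Type*} [NormedAddCommGroup H] [InnerProductSpace ℝ H]

theorem norm_tseng_step_sub_sq (z w x u v : H) (lam : ℝ) :
    ‖w + lam • (u - v) - x‖ ^ 2 = ‖z - x‖ ^ 2 - ‖w - z‖ ^ 2 + lam ^ 2 * ‖u - v‖ ^ 2
      - 2 * (⟪z - lam • u - w, w - x⟫ + lam * ⟪v, w - x⟫) := by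
  simp only [← real_inner_self_eq_norm_sq, inner_add_left, inner_add_right, inner_sub_left,
    inner_sub_right, real_inner_smul_left, real_inner_smul_right]
  rw [real_inner_comm w u, real_inner_comm w v, real_inner_comm x u, real_inner_comm x v,
    real_inner_comm x w, real_inner_comm x z, real_inner_comm w z]
  ring

theorem norm_tseng_step_sub_sq_le {z w x u v : H} {lam : ℝ} (hlam : 0 ≤ lam)
    (hproj : ⟪z - lam • u - w, x - w⟫ ≤ 0) (hx : 0 ≤ ⟪v, w - x⟫) :
    ‖w + lam • (u - v) - x‖ ^ 2 ≤ ‖z - x‖ ^ 2 - ‖w - z‖ ^ 2 + lam ^ 2 * ‖u - v‖ ^ 2 := by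
  have hproj' : 0 ≤ ⟪z - lam • u - w, w - x⟫ := by
    rw [← neg_sub x w, inner_neg_right]
    exact neg_nonneg.mpr hproj
  rw [norm_tseng_step_sub_sq z]
  linarith [mul_nonneg hlam hx]

end TsengStep

theorem stmt_16_general {H : Type*} [NormedAddCommGroup H] [InnerProductSpace ℝ H]
    (C : Set H)
    (F : H → H) (zn wn zn1 x : H) (lam lam' μ : ℝ)
    (hμ : μ ∈ Set.Ioo (0 : ℝ) 1) (hlam : 0 < lam)
    (hwnproj : ∀ u ∈ C, ⟪zn - lam • F zn - wn, u - wn⟫ ≤ 0)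
    (hzn1 : zn1 = wn + lam • (F zn - F wn))
    (hx : x ∈ C) (hxineq : 0 ≤ ⟪F wn, wn - x⟫)
    (hstep : lam' ≤ μ * ‖zn - wn‖ / ‖F zn - F wn‖)
    (hmono : lam ≤ lam') :
    ‖zn1 - x‖ ^ 2 ≤ ‖zn - x‖ ^ 2 - (1 - μ ^ 2) * ‖wn - zn‖ ^ 2 := by
  subst hzn1
  have hstep' : lam * ‖F zn - F wn‖ ≤ μ * ‖wn - zn‖ := by
    rw [norm_sub_rev wn zn]
    exact mul_le_of_le_div₀ (mul_nonneg hμ.1.le (norm_nonneg _)) (norm_nonneg _)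
      (hmono.trans hstep)
  have hstep_sq : lam ^ 2 * ‖F zn - F wn‖ ^ 2 ≤ μ ^ 2 * ‖wn - zn‖ ^ 2 := by
    rw [← mul_pow, ← mul_pow]
    exact pow_le_pow_left₀ (by positivity) hstep' 2
  linarith [norm_tseng_step_sub_sq_le hlam.le (hwnproj x hx) hxineq]

/-- Under the hypotheses of the one-step inequality of Tseng's method, if additionally
`λ_{n+1} ≤ μ ‖z_n - w_n‖ / ‖F z_n - F w_n‖` (with `F z_n ≠ F w_n`) and
`λ_n ≤ λ_{n+1}`, `μ ∈ (0,1)`, then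
`‖z_{n+1} - x*‖² ≤ ‖z_n - x*‖² - (1 - μ²) ‖w_n - z_n‖²`. -/
theorem stmt_16 {H : Type*} [NormedAddCommGroup H] [InnerProductSpace ℝ H] [CompleteSpace H]
    (C : Set H) (hCne : C.Nonempty) (hCc : IsClosed C) (hC : Convex ℝ C)
    (F : H → H) (zn wn zn1 x : H) (lam lam' μ : ℝ)
    (hμ : μ ∈ Set.Ioo (0 : ℝ) 1) (hlam : 0 < lam) (hlam' : 0 < lam')
    (hwn : wn ∈ C)
    (hwnproj : ∀ u ∈ C, ⟪zn - lam • F zn - wn, u - wn⟫ ≤ 0)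
    (hzn1 : zn1 = wn + lam • (F zn - F wn))
    (hx : x ∈ C) (hxineq : 0 ≤ ⟪F wn, wn - x⟫)
    (hne : F (zn) ≠ F (wn))
    (hstep : lam' ≤ μ * ‖zn - wn‖ / ‖F zn - F wn‖)
    (hmono : lam ≤ lam') :
    ‖zn1 - x‖ ^ 2 ≤ ‖zn - x‖ ^ 2 - (1 - μ ^ 2) * ‖wn - zn‖ ^ 2 :=
  stmt_16_general C F zn wn zn1 x lam lam' μ hμ hlam hwnproj hzn1 hx hxineq hstep hmono
end

section
/- For any z ∈ H and λ̄ > 0, with e(z, λ) = z − P_C(z − λF(z)), the residuals at stepsize λ̄ and 1 satisfy min{1, λ̄}‖e(z, 1)‖ ≤ ‖e(z, λ̄)‖ ≤ max{1, λ̄}‖e(z, 1)‖. -/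
/-!
Let `x = e(z, 1)` and `y = e(z, λ̄)`. Adding `λ̄` times the variational inequality of the first
projection to that of the second cancels `F z` and leaves `⟪λ̄ x - y, x - y⟫ ≤ 0`. With
Cauchy–Schwarz this says `(‖x‖ - ‖y‖) (λ̄ ‖x‖ - ‖y‖) ≤ 0`, i.e. `‖y‖` lies between `‖x‖` and
`λ̄ ‖x‖`.
-/

open scoped RealInnerProductSpace

lemma min_le_and_le_max_of_mul_sub_nonpos {a b c : ℝ} (h : (a - b) * (c - b) ≤ 0) :
    min a c ≤ b ∧ b ≤ max a c := by
  rcases le_total a c with hac | hca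
  · rw [min_eq_left hac, max_eq_right hac]
    constructor <;> nlinarith
  · rw [min_eq_right hca, max_eq_left hca]
    constructor <;> nlinarith

section InnerProductSpace

variable {H : Type*} [NormedAddCommGroup H] [InnerProductSpace ℝ H]

lemma real_inner_sub_le_zero_of_forall_norm_sub_le_s18 {K : Set H} (hK : Convex ℝ K) {x p : H}
    (hp : p ∈ K) (hmin : ∀ u ∈ K, ‖x - p‖ ≤ ‖x - u‖) : ∀ w ∈ K, ⟪x - p, w - p⟫ ≤ 0 := by
  rw [← norm_eq_iInf_iff_real_inner_le_zero hK hp]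
  have : Nonempty K := ⟨⟨p, hp⟩⟩
  refine le_antisymm (le_ciInf fun w => hmin w w.2) (ciInf_le ?_ (⟨p, hp⟩ : K))
  exact ⟨0, Set.forall_mem_range.2 fun _ => norm_nonneg _⟩

lemma norm_sub_mul_sub_nonpos_of_inner_smul_sub_nonpos {x y : H} {lam : ℝ} (hlam : 0 ≤ lam)
    (h : ⟪lam • x - y, x - y⟫ ≤ 0) : (‖x‖ - ‖y‖) * (lam * ‖x‖ - ‖y‖) ≤ 0 := by
  have hexpand : ⟪lam • x - y, x - y⟫ = lam * ‖x‖ ^ 2 - (lam + 1) * ⟪x, y⟫ + ‖y‖ ^ 2 := by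
    simp only [inner_sub_left, inner_sub_right, real_inner_smul_left, real_inner_self_eq_norm_sq,
      real_inner_comm x y]
    ring
  have hcs : (lam + 1) * ⟪x, y⟫ ≤ (lam + 1) * (‖x‖ * ‖y‖) :=
    mul_le_mul_of_nonneg_left (real_inner_le_norm x y) (by linarith)
  linarith

lemma min_mul_norm_le_and_le_max_mul_norm {x y : H} {lam : ℝ} (hlam : 0 ≤ lam)
    (h : ⟪lam • x - y, x - y⟫ ≤ 0) :
    min 1 lam * ‖x‖ ≤ ‖y‖ ∧ ‖y‖ ≤ max 1 lam * ‖x‖ := by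
  rw [min_mul_of_nonneg _ _ (norm_nonneg x), max_mul_of_nonneg _ _ (norm_nonneg x), one_mul]
  exact min_le_and_le_max_of_mul_sub_nonpos
    (norm_sub_mul_sub_nonpos_of_inner_smul_sub_nonpos hlam h)

end InnerProductSpace

theorem stmt_18_general {H : Type*} [NormedAddCommGroup H] [InnerProductSpace ℝ H]
    (C : Set H) (hC : Convex ℝ C)
    (F : H → H) (z : H) (lam : ℝ) (hlam : 0 < lam)
    (p1 plam : H)
    (hp1 : p1 ∈ C) (hp1proj : ∀ u ∈ C, ‖z - (1 : ℝ) • F z - p1‖ ≤ ‖z - (1 : ℝ) • F z - u‖)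
    (hplam : plam ∈ C) (hplamproj : ∀ u ∈ C, ‖z - lam • F z - plam‖ ≤ ‖z - lam • F z - u‖) :
    min 1 lam * ‖z - p1‖ ≤ ‖z - plam‖ ∧ ‖z - plam‖ ≤ max 1 lam * ‖z - p1‖ := by
  have h1 := real_inner_sub_le_zero_of_forall_norm_sub_le_s18 hC hp1 hp1proj plam hplam
  have h2 := real_inner_sub_le_zero_of_forall_norm_sub_le_s18 hC hplam hplamproj p1 hp1
  refine min_mul_norm_le_and_le_max_mul_norm hlam.le ?_
  have hsum : ⟪lam • (z - p1) - (z - plam), (z - p1) - (z - plam)⟫ =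
      lam * ⟪z - (1 : ℝ) • F z - p1, plam - p1⟫ + ⟪z - lam • F z - plam, p1 - plam⟫ := by
    rw [show (z - p1) - (z - plam) = plam - p1 by abel,
      show lam • (z - p1) - (z - plam) = lam • (z - (1 : ℝ) • F z - p1) - (z - lam • F z - plam)
        by module,
      inner_sub_left, real_inner_smul_left, sub_eq_add_neg, ← inner_neg_right, neg_sub]
  rw [hsum]
  exact add_nonpos (mul_nonpos_of_nonneg_of_nonpos hlam.le h1) h2

/-- For any `z ∈ H` and `λ̄ > 0`, with `e(z, λ) = z - P_C (z - λ F z)`, the residuals at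
stepsizes `λ̄` and `1` satisfy
`min {1, λ̄} ‖e(z, 1)‖ ≤ ‖e(z, λ̄)‖ ≤ max {1, λ̄} ‖e(z, 1)‖`. -/
theorem stmt_18 {H : Type*} [NormedAddCommGroup H] [InnerProductSpace ℝ H] [CompleteSpace H]
    (C : Set H) (hCne : C.Nonempty) (hCc : IsClosed C) (hC : Convex ℝ C)
    (F : H → H) (z : H) (lam : ℝ) (hlam : 0 < lam)
    (p1 plam : H)
    (hp1 : p1 ∈ C) (hp1proj : ∀ u ∈ C, ‖z - (1 : ℝ) • F z - p1‖ ≤ ‖z - (1 : ℝ) • F z - u‖)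
    (hplam : plam ∈ C) (hplamproj : ∀ u ∈ C, ‖z - lam • F z - plam‖ ≤ ‖z - lam • F z - u‖) :
    min 1 lam * ‖z - p1‖ ≤ ‖z - plam‖ ∧ ‖z - plam‖ ≤ max 1 lam * ‖z - p1‖ :=
  stmt_18_general C hC F z lam hlam p1 plam hp1 hp1proj hplam hplamproj
end

section
/- Let F: H → H be quasimonotone and uniformly continuous, {w_n} ⊆ C with w_n ⇀ u* weakly, and suppose lim_{k→∞} ⟨F(w_{n_k}), q − w_{n_k}⟩ = 0 for a fixed q ∈ C, while ‖F(w_{n_k})‖ ≥ S/2 > 0 for all large k. Then ⟨F(q), q − u*⟩ ≥ 0. -/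
open Filter
open scoped RealInnerProductSpace

/-- A weakly convergent sequence in a Hilbert space is norm-bounded. -/
lemma weak_bounded {H : Type*} [NormedAddCommGroup H] [InnerProductSpace ℝ H]
    (w : ℕ → H) (u : H)
    (hweak : ∀ f : H →L[ℝ] ℝ, Tendsto (fun n => f (w n)) atTop (nhds (f u))) :
    ∃ M : ℝ, ∀ n, ‖w n‖ ≤ M := by
  set g : ℕ → StrongDual ℝ H →L[ℝ] ℝ :=
    fun n => NormedSpace.inclusionInDoubleDual ℝ H (w n) with hg
  have hpt : ∀ f : StrongDual ℝ H, ∃ C, ∀ n, ‖g n f‖ ≤ C := by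
    intro f
    obtain ⟨C, hC⟩ := ((hweak f).norm).bddAbove_range
    exact ⟨C, fun n => hC ⟨n, rfl⟩⟩
  obtain ⟨M, hM⟩ := banach_steinhaus hpt
  refine ⟨M, fun n => ?_⟩
  have h1 : ‖w n‖ ^ 2 = (g n) (innerSL ℝ (w n)) := by
    rw [← real_inner_self_eq_norm_sq]; rfl
  have h2 : ‖(g n) (innerSL ℝ (w n))‖ ≤ ‖g n‖ * ‖innerSL ℝ (w n)‖ :=
    (g n).le_opNorm _
  rw [innerSL_apply_norm] at h2
  have h3 : ‖g n‖ ≤ M := hM n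
  have h0 : (0:ℝ) ≤ ‖g n‖ := ContinuousLinearMap.opNorm_nonneg _
  have h4 : ‖w n‖ ^ 2 ≤ M * ‖w n‖ := by
    calc ‖w n‖ ^ 2 = (g n) (innerSL ℝ (w n)) := h1
    _ ≤ ‖(g n) (innerSL ℝ (w n))‖ := le_abs_self _
    _ ≤ ‖g n‖ * ‖w n‖ := h2
    _ ≤ M * ‖w n‖ := mul_le_mul_of_nonneg_right h3 (norm_nonneg _)
  rcases eq_or_lt_of_le (norm_nonneg (w n)) with h | h
  · nlinarith
  · nlinarith

/-- Let `F` be quasimonotone and uniformly continuous, `{w_n} ⊆ C` with `w_n ⇀ u*`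
weakly, and suppose `⟪F w_{n_k}, q - w_{n_k}⟫ → 0` along a subsequence, for a fixed
`q ∈ C`, while `‖F w_{n_k}‖ ≥ S/2 > 0` for all large `k`. Then `⟪F q, q - u*⟫ ≥ 0`. -/
theorem stmt_19 {H : Type*} [NormedAddCommGroup H] [InnerProductSpace ℝ H] [CompleteSpace H]
    (C : Set H) (hCne : C.Nonempty) (hCc : IsClosed C) (hC : Convex ℝ C)
    (F : H → H)
    (hquasi : ∀ w z : H, 0 < ⟪F w, z - w⟫ → 0 ≤ ⟪F z, z - w⟫)
    (hucont : ∀ ε > (0 : ℝ), ∃ δ > (0 : ℝ), ∀ w z : H, ‖w - z‖ < δ → ‖F w - F z‖ < ε)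
    (w : ℕ → H) (hw : ∀ n, w n ∈ C)
    (u : H) (hu : u ∈ C)
    (hweak : ∀ f : H →L[ℝ] ℝ, Tendsto (fun n => f (w n)) atTop (nhds (f u)))
    (q : H) (hq : q ∈ C)
    (φ : ℕ → ℕ) (hφ : StrictMono φ)
    (hlim : Tendsto (fun k => ⟪F (w (φ k)), q - w (φ k)⟫) atTop (nhds 0))
    (S : ℝ) (hS : 0 < S)
    (hbelow : ∃ K : ℕ, ∀ k ≥ K, S / 2 ≤ ‖F (w (φ k))‖) :
    0 ≤ ⟪F q, q - u⟫ := by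
  obtain ⟨K, hK⟩ := hbelow
  obtain ⟨M, hM⟩ := weak_bounded w u hweak
  -- abbreviations
  set W : ℕ → H := fun k => w (φ k) with hW
  set a : ℕ → ℝ := fun k => ⟪F (W k), q - W k⟫ with ha
  set ω : ℕ → ℝ := fun k => |a k| + (1 : ℝ) / (k + 1) with hω
  have hωpos : ∀ k, 0 < ω k := fun k => by
    have h1 : (0:ℝ) < 1 / (k+1) := by positivity
    have h2 := abs_nonneg (a k); simp only [hω]; linarith
  have hωlim : Tendsto ω atTop (nhds 0) := by
    have h1 : Tendsto (fun k => |a k|) atTop (nhds 0) := by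
      simpa using hlim.abs
    have h2 : Tendsto (fun k : ℕ => (1:ℝ) / (k+1)) atTop (nhds 0) :=
      tendsto_one_div_add_atTop_nhds_zero_nat
    simpa [hω] using h1.add h2
  set ρ : ℕ → H := fun k => (‖F (W k)‖ ^ 2)⁻¹ • F (W k) with hρ
  set z : ℕ → H := fun k => q + ω k • ρ k with hz
  have hKn : ∀ k ≥ K, (0:ℝ) < ‖F (W k)‖ := fun k hk =>
    lt_of_lt_of_le (by linarith) (hK k hk)
  have hFne : ∀ k ≥ K, F (W k) ≠ 0 := fun k hk =>
    norm_pos_iff.mp (hKn k hk)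
  have hρnorm : ∀ k ≥ K, ‖ρ k‖ ≤ 2 / S := by
    intro k hk
    have hpos := hKn k hk
    have heq : ‖ρ k‖ = ‖F (W k)‖⁻¹ := by
      simp only [hρ, norm_smul, norm_inv, norm_pow, norm_norm]
      rw [pow_two]; field_simp
    rw [heq, show (2:ℝ)/S = (S/2)⁻¹ by rw [inv_div]]
    exact inv_anti₀ (by linarith) (hK k hk)
  -- nonnegativity from quasimonotonicity
  have hb : ∀ k ≥ K, 0 ≤ ⟪F (z k), z k - W k⟫ := by
    intro k hk
    apply hquasi
    have hn2 : ‖F (W k)‖ ^ 2 ≠ 0 := pow_ne_zero _ (ne_of_gt (hKn k hk))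
    have hdiff : z k - W k = (q - W k) + ω k • ρ k := by
      simp only [hz]; abel
    have hval : ⟪F (W k), z k - W k⟫ = a k + ω k := by
      rw [hdiff, inner_add_right, real_inner_smul_right]
      simp only [hρ, real_inner_smul_right]
      rw [real_inner_self_eq_norm_sq]
      field_simp
      rw [mul_div_assoc, div_self (ne_of_gt (hKn k hk)), mul_one]
    rw [hval]
    have h1 : -(|a k|) ≤ a k := neg_abs_le _
    have h2 : (0:ℝ) < 1 / (k+1) := by positivity
    simp only [hω]; linarith
  -- strong convergence z → q
  have hzq : Tendsto z atTop (nhds q) := by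
    rw [tendsto_iff_norm_sub_tendsto_zero]
    have hg := hωlim.mul_const (2/S)
    rw [zero_mul] at hg
    apply squeeze_zero_norm' _ hg
    filter_upwards [eventually_ge_atTop K] with k hk
    have : z k - q = ω k • ρ k := by simp only [hz]; abel
    rw [norm_norm, this, norm_smul, Real.norm_eq_abs,
      abs_of_pos (hωpos k)]
    exact mul_le_mul_of_nonneg_left (hρnorm k hk) (le_of_lt (hωpos k))
  -- F z → F q
  have hFz : Tendsto (fun k => F (z k)) atTop (nhds (F q)) := by
    rw [Metric.tendsto_atTop]
    intro ε hε
    obtain ⟨δ, hδ, hδ'⟩ := hucont ε hε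
    obtain ⟨N, hN⟩ := (Metric.tendsto_atTop.mp hzq) δ hδ
    refine ⟨N, fun k hk => ?_⟩
    rw [dist_eq_norm]
    exact hδ' _ _ (by rw [← dist_eq_norm]; exact hN k hk)
  have hFzn : Tendsto (fun k => ‖F (z k) - F q‖) atTop (nhds 0) :=
    tendsto_iff_norm_sub_tendsto_zero.mp hFz
  -- bound on ω
  obtain ⟨B, hB⟩ := hωlim.bddAbove_range
  have hBω : ∀ k, ω k ≤ B := fun k => hB ⟨k, rfl⟩
  set R : ℝ := B * (2/S) + ‖q‖ + M with hR
  -- term 1 → 0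
  have ht1 : Tendsto (fun k => ⟪F (z k) - F q, z k - W k⟫) atTop (nhds 0) := by
    have hg : Tendsto (fun k => ‖F (z k) - F q‖ * R) atTop (nhds 0) := by
      simpa using hFzn.mul_const R
    apply squeeze_zero_norm' _ hg
    filter_upwards [eventually_ge_atTop K] with k hk
    have hzw : ‖z k - W k‖ ≤ R := by
      have h1 : z k - W k = (ω k • ρ k) + (q - W k) := by simp only [hz]; abel
      calc ‖z k - W k‖ ≤ ‖ω k • ρ k‖ + (‖q‖ + ‖W k‖) := by
            rw [h1]; exact (norm_add_le _ _).trans (by gcongr; exact norm_sub_le _ _)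
      _ ≤ B * (2/S) + (‖q‖ + M) := by
            gcongr
            · rw [norm_smul, Real.norm_eq_abs, abs_of_pos (hωpos k)]
              have := hρnorm k hk
              have h2 : (0:ℝ) ≤ 2/S := by positivity
              calc ω k * ‖ρ k‖ ≤ ω k * (2/S) :=
                    mul_le_mul_of_nonneg_left this (le_of_lt (hωpos k))
              _ ≤ B * (2/S) := mul_le_mul_of_nonneg_right (hBω k) h2
            · exact hM (φ k)
      _ = R := by ring
    calc ‖⟪F (z k) - F q, z k - W k⟫‖ ≤ ‖F (z k) - F q‖ * ‖z k - W k‖ :=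
          norm_inner_le_norm _ _
    _ ≤ ‖F (z k) - F q‖ * R := mul_le_mul_of_nonneg_left hzw (norm_nonneg _)
  -- term 2 → 0
  have ht2 : Tendsto (fun k => ⟪F q, z k - q⟫) atTop (nhds 0) := by
    have h := Filter.Tendsto.inner (𝕜 := ℝ)
      (tendsto_const_nhds : Tendsto (fun _ : ℕ => F q) atTop (nhds (F q)))
      (hzq.sub (tendsto_const_nhds : Tendsto (fun _ : ℕ => q) atTop (nhds q)))
    simpa using h
  -- term 3 → ⟪F q, q - u⟫
  have ht3 : Tendsto (fun k => ⟪F q, q - W k⟫) atTop (nhds ⟪F q, q - u⟫) := by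
    have h := ((hweak (innerSL ℝ (F q))).comp hφ.tendsto_atTop).const_sub ⟪F q, q⟫
    simp only [Function.comp, innerSL_apply_apply] at h
    simpa [inner_sub_right] using h
  -- combine
  have hsum : Tendsto (fun k => ⟪F (z k), z k - W k⟫) atTop (nhds ⟪F q, q - u⟫) := by
    have := (ht1.add ht2).add ht3
    rw [zero_add, zero_add] at this
    convert this using 1
    funext k
    have : z k - W k = (z k - q) + (q - W k) := by abel
    rw [show ⟪F (z k), z k - W k⟫ = ⟪F (z k) - F q, z k - W k⟫ + ⟪F q, z k - W k⟫ by
        rw [inner_sub_left]; ring]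
    simp only [this, inner_add_right]
    ring
  exact ge_of_tendsto hsum (eventually_atTop.2 ⟨K, hb⟩)
end
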